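/- Let (Ω, Σ, μ) be a nonatomic σ-finite measure space with μ(Ω) = ∞, let 1 ≤ p < ∞, and let θ : ℝ → ℝ be a continuous nonnegative function such that ∫_Ω θ(f(t)) dμ(t) < ∞ for every f ∈ Lᵖ(μ). Then there exists a ∈ ℝ such that θ(λ) ≤ a·|λ|^p for all λ ∈ ℝ. -/

import Mathlib

/-!
If no bound `θ(λ) ≤ a|λ|^p` holds, pick `λₙ` with `θ(λₙ) > 2ⁿ|λₙ|^p`. Because `μ` is nonatomic
and `μ(Ω) = ∞`, an exhaustion argument produces pairwise disjoint sets `Aₙ` whose measures lie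
in `[sₙ, 2sₙ]`, where `sₙ = 2⁻ⁿ|λₙ|⁻ᵖ`. The step function `f = ∑ λₙ 1_{Aₙ}` then has
`∫ |f|^p ≤ ∑ 2 · 2⁻ⁿ < ∞`, while every term of `∫ θ ∘ f = ∑ θ(λₙ) μ(Aₙ)` is at least `1`.
-/

open MeasureTheory Set Filter Function
open scoped ENNReal NNReal

section Indicator

variable {Ω ι M : Type*} {A : ι → Set Ω} [AddCommMonoid M] [TopologicalSpace M]

theorem hasSum_indicator_apply_of_mem (hA : Pairwise (Disjoint on A)) (c : ι → M) {x : Ω}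
    {n : ι} (hx : x ∈ A n) : HasSum (fun k => (A k).indicator (fun _ => c k) x) (c n) := by
  convert hasSum_single (f := fun k => (A k).indicator (fun _ => c k) x) n fun k hk =>
    indicator_of_notMem (fun hxk => disjoint_left.1 (hA hk) hxk hx) _
  rw [indicator_of_mem hx]

theorem summable_indicator_apply (hA : Pairwise (Disjoint on A)) (c : ι → M) (x : Ω) :
    Summable fun k => (A k).indicator (fun _ => c k) x := by
  by_cases hx : ∃ n, x ∈ A n
  · obtain ⟨n, hn⟩ := hx
    exact (hasSum_indicator_apply_of_mem hA c hn).summable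
  · push Not at hx
    simp [indicator_of_notMem, hx]

end Indicator

namespace MeasureTheory

variable {Ω : Type*} [MeasurableSpace Ω] {μ : Measure Ω}

theorem exists_mem_forall_measure_le_of_iUnion_mem {𝒜 : Set (Set Ω)} (h𝒜 : 𝒜.Nonempty)
    (hU : ∀ C : ℕ → Set Ω, (∀ n, C n ∈ 𝒜) → ⋃ n, C n ∈ 𝒜) :
    ∃ B ∈ 𝒜, ∀ C ∈ 𝒜, μ C ≤ μ B := by
  obtain ⟨u, -, hu, hu𝒜⟩ := exists_seq_tendsto_sSup (h𝒜.image μ) (OrderTop.bddAbove _)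
  choose C hC𝒜 hCu using hu𝒜
  refine ⟨⋃ n, C n, hU C hC𝒜, fun D hD => ?_⟩
  calc μ D ≤ sSup (μ '' 𝒜) := le_sSup (mem_image_of_mem μ hD)
    _ ≤ μ (⋃ n, C n) := le_of_tendsto' hu fun n => hCu n ▸ measure_mono (subset_iUnion C n)

def Measure.IsNonatomic (μ : Measure Ω) : Prop :=
  ∀ A : Set Ω, MeasurableSet A → 0 < μ A → ∃ B ⊆ A, MeasurableSet B ∧ 0 < μ B ∧ μ B < μ A

namespace Measure.IsNonatomic

variable {A S : Set Ω}

theorem exists_subset_two_mul_le (hμ : μ.IsNonatomic) (hA : MeasurableSet A) (h0 : 0 < μ A) :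
    ∃ B ⊆ A, MeasurableSet B ∧ 0 < μ B ∧ 2 * μ B ≤ μ A := by
  obtain ⟨C, hCA, hC, hC0, hCA'⟩ := hμ A hA h0
  have hsum : μ C + μ (A \ C) = μ A := by
    rw [measure_add_sdiff hC.nullMeasurableSet, union_eq_right.2 hCA]
  by_cases hC2 : 2 * μ C ≤ μ A
  · exact ⟨C, hCA, hC, hC0, hC2⟩
  refine ⟨A \ C, sdiff_subset, hA.diff hC, pos_iff_ne_zero.2 fun hD => ?_, ?_⟩
  · rw [hD, add_zero] at hsum
    exact hCA'.ne hsum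
  · by_contra hD2
    have h := ENNReal.add_lt_add (not_le.1 hC2) (not_le.1 hD2)
    rw [← mul_add, hsum, two_mul] at h
    exact lt_irrefl _ h

theorem exists_subset_pos_le (hμ : μ.IsNonatomic) (hA : MeasurableSet A) (h0 : 0 < μ A)
    {ε : ℝ≥0∞} (hε : 0 < ε) : ∃ B ⊆ A, MeasurableSet B ∧ 0 < μ B ∧ μ B ≤ ε := by
  obtain ⟨A', hA'A, hA', hA'0, hA'lt⟩ := hμ A hA h0
  have halve : ∀ n : ℕ, ∃ B ⊆ A', MeasurableSet B ∧ 0 < μ B ∧ 2 ^ n * μ B ≤ μ A' := by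
    intro n
    induction n with
    | zero => exact ⟨A', subset_rfl, hA', hA'0, by simp⟩
    | succ n ih =>
      obtain ⟨B, hBA', hB, hB0, hBle⟩ := ih
      obtain ⟨C, hCB, hC, hC0, hCB'⟩ := hμ.exists_subset_two_mul_le hB hB0
      refine ⟨C, hCB.trans hBA', hC, hC0, ?_⟩
      calc 2 ^ (n + 1) * μ C = 2 ^ n * (2 * μ C) := by ring
        _ ≤ 2 ^ n * μ B := by gcongr
        _ ≤ μ A' := hBle
  obtain ⟨n, hn⟩ := ENNReal.exists_nat_mul_gt hε.ne' (hA'lt.trans_le le_top).ne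
  obtain ⟨B, hBA', hB, hB0, hBle⟩ := halve n
  refine ⟨B, hBA'.trans hA'A, hB, hB0, ?_⟩
  have hn2 : (n : ℝ≥0∞) ≤ 2 ^ n := by exact_mod_cast Nat.lt_two_pow_self.le
  refine (ENNReal.mul_le_mul_iff_right (pow_ne_zero n two_ne_zero)
    (ENNReal.pow_ne_top ENNReal.ofNat_ne_top)).1 ?_
  calc 2 ^ n * μ B ≤ μ A' := hBle
    _ ≤ n * ε := hn.le
    _ ≤ 2 ^ n * ε := by gcongr

theorem exists_subset_measure_mem_Icc (hμ : μ.IsNonatomic) (hS : MeasurableSet S)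
    (hS_top : μ S = ∞) {r : ℝ≥0∞} (hr0 : 0 < r) (hr : r ≠ ∞) :
    ∃ B ⊆ S, MeasurableSet B ∧ μ B ∈ Icc r (2 * r) := by
  by_contra! hcon
  set 𝒜 : Set (Set Ω) := {B | B ⊆ S ∧ MeasurableSet B ∧ μ B ≤ r}
  -- Under `hcon`, a union of two members of `𝒜` has measure `≤ 2r`, hence `< r`.
  have union_mem : ∀ B ∈ 𝒜, ∀ C ∈ 𝒜, B ∪ C ∈ 𝒜 := by
    rintro B ⟨hBS, hB, hBr⟩ C ⟨hCS, hC, hCr⟩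
    refine ⟨union_subset hBS hCS, hB.union hC, not_lt.1 fun hlt => ?_⟩
    refine hcon _ (union_subset hBS hCS) (hB.union hC) ⟨hlt.le, ?_⟩
    calc μ (B ∪ C) ≤ μ B + μ C := measure_union_le B C
      _ ≤ 2 * r := by rw [two_mul]; gcongr
  have iUnion_mem : ∀ C : ℕ → Set Ω, (∀ n, C n ∈ 𝒜) → ⋃ n, C n ∈ 𝒜 := by
    intro C hC
    have hacc : ∀ n, accumulate C n ∈ 𝒜 := by
      intro n
      induction n with
      | zero => simpa using hC 0
      | succ n ih => simpa [accumulate_succ] using union_mem _ ih _ (hC (n + 1))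
    refine ⟨iUnion_subset fun n => (hC n).1, MeasurableSet.iUnion fun n => (hC n).2.1, ?_⟩
    rw [measure_iUnion_eq_iSup_accumulate]
    exact iSup_le fun n => (hacc n).2.2
  obtain ⟨B, hB𝒜, hBmax⟩ := exists_mem_forall_measure_le_of_iUnion_mem (μ := μ) (𝒜 := 𝒜)
    ⟨∅, empty_subset S, .empty, by simp⟩ iUnion_mem
  have hB_top : μ B ≠ ∞ := (hB𝒜.2.2.trans_lt hr.lt_top).ne
  obtain ⟨D, hDSB, hD, hD0, hDr⟩ := hμ.exists_subset_pos_le (hS.diff hB𝒜.2.1)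
    (by rw [measure_sdiff_eq_top hS_top hB_top]; exact ENNReal.zero_lt_top) hr0
  have hBD : μ (B ∪ D) = μ B + μ D :=
    measure_union (disjoint_sdiff_right.mono_right hDSB) hD
  refine (hBmax _ (union_mem B hB𝒜 D ⟨hDSB.trans sdiff_subset, hD, hDr⟩)).not_gt ?_
  rw [hBD]
  exact ENNReal.lt_add_right hB_top hD0.ne'

theorem exists_pairwise_disjoint_measure_mem_Icc (hμ : μ.IsNonatomic) (hμ_top : μ univ = ∞)
    {r : ℕ → ℝ≥0∞} (hr0 : ∀ n, 0 < r n) (hr : ∀ n, r n ≠ ∞) :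
    ∃ A : ℕ → Set Ω, (∀ n, MeasurableSet (A n)) ∧ Pairwise (Disjoint on A) ∧
      ∀ n, μ (A n) ∈ Icc (r n) (2 * r n) := by
  have next : ∀ (n : ℕ) (U : Set Ω), MeasurableSet U → μ U ≠ ∞ →
      ∃ B ⊆ Uᶜ, MeasurableSet B ∧ μ B ∈ Icc (r n) (2 * r n) := fun n U hU hU_top =>
    hμ.exists_subset_measure_mem_Icc hU.compl
      (by rw [compl_eq_univ_sdiff]; exact measure_sdiff_eq_top hμ_top hU_top) (hr0 n) (hr n)
  choose! B hBU hB hBr using next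
  -- `U n` is the union of the sets chosen before step `n`.
  let U : ℕ → Set Ω := fun n => Nat.rec ∅ (fun n U => U ∪ B n U) n
  have hU : ∀ n, MeasurableSet (U n) ∧ μ (U n) ≠ ∞ := by
    intro n
    induction n with
    | zero => simp [U]
    | succ n ih =>
      refine ⟨ih.1.union (hB n _ ih.1 ih.2), measure_union_ne_top ih.2 ?_⟩
      exact ((hBr n _ ih.1 ih.2).2.trans_lt (ENNReal.mul_lt_top (by simp) (hr n).lt_top)).ne
  have hU_mono : Monotone U := monotone_nat_of_le_succ fun n => subset_union_left
  refine ⟨fun n => B n (U n), fun n => hB n _ (hU n).1 (hU n).2,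
    (pairwise_disjoint_on _).2 fun m n hmn => ?_, fun n => hBr n _ (hU n).1 (hU n).2⟩
  have hmU : B m (U m) ⊆ U n := (subset_union_right (s := U m)).trans (hU_mono hmn)
  exact (disjoint_compl_right.mono_right (hBU n _ (hU n).1 (hU n).2)).mono_left hmU

end Measure.IsNonatomic

theorem lintegral_comp_tsum_indicator {ι M : Type*} [AddCommMonoid M] [TopologicalSpace M]
    [T2Space M] [Countable ι] {A : ι → Set Ω} (hAm : ∀ n, MeasurableSet (A n))
    (hA : Pairwise (Disjoint on A)) (c : ι → M) {Φ : M → ℝ≥0∞} (hΦ : Φ 0 = 0) :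
    ∫⁻ x, Φ (∑' n, (A n).indicator (fun _ => c n) x) ∂μ = ∑' n, Φ (c n) * μ (A n) := by
  have hΦg : ∀ x, Φ (∑' n, (A n).indicator (fun _ => c n) x) =
      ∑' n, (A n).indicator (fun _ => Φ (c n)) x := by
    intro x
    by_cases hx : ∃ n, x ∈ A n
    · obtain ⟨n, hn⟩ := hx
      rw [(hasSum_indicator_apply_of_mem hA c hn).tsum_eq,
        (hasSum_indicator_apply_of_mem hA (fun n => Φ (c n)) hn).tsum_eq]
    · push Not at hx
      simp [indicator_of_notMem, hx, hΦ]
  simp_rw [hΦg]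
  rw [lintegral_tsum fun n => aemeasurable_const.indicator (hAm n)]
  simp_rw [lintegral_indicator_const (hAm _)]

theorem measurable_tsum_indicator {A : ℕ → Set Ω} (hAm : ∀ n, MeasurableSet (A n))
    (hA : Pairwise (Disjoint on A)) (c : ℕ → ℝ) :
    Measurable fun x => ∑' n, (A n).indicator (fun _ => c n) x :=
  measurable_of_tendsto_metrizable
    (fun _ => Finset.measurable_sum _ fun n _ => measurable_const.indicator (hAm n))
    (tendsto_pi_nhds.2 fun x => (summable_indicator_apply hA c x).hasSum.tendsto_sum_nat)

theorem memLp_tsum_indicator {A : ℕ → Set Ω} {p : ℝ≥0∞} (hp0 : p ≠ 0) (hp : p ≠ ∞)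
    (hAm : ∀ n, MeasurableSet (A n)) (hA : Pairwise (Disjoint on A)) (c : ℕ → ℝ)
    (hc : ∑' n, ‖c n‖ₑ ^ p.toReal * μ (A n) < ∞) :
    MemLp (fun x => ∑' n, (A n).indicator (fun _ => c n) x) p μ := by
  refine ⟨(measurable_tsum_indicator hAm hA c).aestronglyMeasurable, ?_⟩
  rwa [eLpNorm_lt_top_iff_lintegral_rpow_enorm_lt_top hp0 hp,
    lintegral_comp_tsum_indicator hAm hA c (Φ := fun y => ‖y‖ₑ ^ p.toReal)
      (by simp [ENNReal.toReal_pos hp0 hp])]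

theorem exists_memLp_lintegral_ofReal_comp_eq_top (hμ : μ.IsNonatomic) (hμ_top : μ univ = ∞)
    {p : ℝ≥0} (hp : p ≠ 0) {θ : ℝ → ℝ} (hθ0 : θ 0 ≤ 0)
    (hθ : ∀ a : ℝ, ∃ l, a * |l| ^ (p : ℝ) < θ l) :
    ∃ f : Ω → ℝ, MemLp f p μ ∧ ∫⁻ x, ENNReal.ofReal (θ (f x)) ∂μ = ∞ := by
  choose l hl using fun n : ℕ => hθ (2 ^ n)
  have hl_pos : ∀ n, 0 < |l n| ^ (p : ℝ) := by
    refine fun n => Real.rpow_pos_of_pos (abs_pos.2 fun hl0 => ?_) _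
    have h := hl n
    rw [hl0, abs_zero, Real.zero_rpow (NNReal.coe_ne_zero.2 hp), mul_zero] at h
    exact h.not_ge hθ0
  have hden : ∀ n, 0 < 2 ^ n * |l n| ^ (p : ℝ) := fun n => mul_pos (pow_pos two_pos n) (hl_pos n)
  set s : ℕ → ℝ := fun n => (2 ^ n * |l n| ^ (p : ℝ))⁻¹
  have hs : ∀ n, 0 < s n := fun n => inv_pos.2 (hden n)
  obtain ⟨A, hAm, hA, hAs⟩ := hμ.exists_pairwise_disjoint_measure_mem_Icc hμ_top
    (r := fun n => ENNReal.ofReal (s n)) (fun n => ENNReal.ofReal_pos.2 (hs n))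
    (fun n => ENNReal.ofReal_ne_top)
  have upper : ∀ n, ‖l n‖ₑ ^ (p : ℝ) * μ (A n) ≤ ENNReal.ofReal (2 * (1 / 2) ^ n) := by
    intro n
    rw [Real.enorm_eq_ofReal_abs, ENNReal.ofReal_rpow_of_nonneg (abs_nonneg _) p.coe_nonneg]
    calc ENNReal.ofReal (|l n| ^ (p : ℝ)) * μ (A n)
        ≤ ENNReal.ofReal (|l n| ^ (p : ℝ)) * ENNReal.ofReal (2 * s n) := by
          rw [ENNReal.ofReal_mul zero_le_two, ENNReal.ofReal_ofNat]
          gcongr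
          exact (hAs n).2
      _ = ENNReal.ofReal (2 * (1 / 2) ^ n) := by
          rw [← ENNReal.ofReal_mul (hl_pos n).le, mul_left_comm]
          congr 2
          simp only [s]
          rw [mul_inv, mul_left_comm, mul_inv_cancel₀ (hl_pos n).ne', mul_one, one_div, inv_pow]
  have lower : ∀ n, 1 ≤ ENNReal.ofReal (θ (l n)) * μ (A n) := by
    intro n
    have hθl : 2 ^ n * |l n| ^ (p : ℝ) ≤ θ (l n) := (hl n).le
    calc (1 : ℝ≥0∞) ≤ ENNReal.ofReal (θ (l n) * s n) := by
          rw [← ENNReal.ofReal_one]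
          refine ENNReal.ofReal_le_ofReal ?_
          rw [← div_eq_mul_inv, one_le_div (hden n)]
          exact hθl
      _ ≤ ENNReal.ofReal (θ (l n)) * μ (A n) := by
          rw [ENNReal.ofReal_mul ((hden n).le.trans hθl)]
          gcongr
          exact (hAs n).1
  refine ⟨_, memLp_tsum_indicator (by simpa using hp) ENNReal.coe_ne_top hAm hA l ?_, ?_⟩
  · calc ∑' n, ‖l n‖ₑ ^ (p : ℝ≥0∞).toReal * μ (A n)
        ≤ ∑' n : ℕ, ENNReal.ofReal (2 * (1 / 2) ^ n) := ENNReal.tsum_le_tsum upper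
      _ = ENNReal.ofReal (∑' n : ℕ, 2 * (1 / 2) ^ n) :=
          (ENNReal.ofReal_tsum_of_nonneg (fun n => by positivity)
            (summable_geometric_two.mul_left 2)).symm
      _ < ∞ := ENNReal.ofReal_lt_top
  · rw [lintegral_comp_tsum_indicator hAm hA l (Φ := fun y => ENNReal.ofReal (θ y))
      (ENNReal.ofReal_eq_zero.2 hθ0)]
    exact top_unique ((ENNReal.tsum_const_eq_top_of_ne_zero one_ne_zero).symm.le.trans
      (ENNReal.tsum_le_tsum lower))

end MeasureTheory

theorem stmt18_general {Ω : Type*} [MeasurableSpace Ω] (μ : Measure Ω)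
    (hna : ∀ A : Set Ω, MeasurableSet A → 0 < μ A →
      ∃ B ⊆ A, MeasurableSet B ∧ 0 < μ B ∧ μ B < μ A)
    (hinf : μ Set.univ = ⊤)
    (p : NNReal) (hp : 1 ≤ p)
    (θ : ℝ → ℝ)
    (hfin : ∀ f : Lp ℝ p μ, ∫⁻ t, ENNReal.ofReal (θ (f t)) ∂μ < ⊤) :
    ∃ a : ℝ, ∀ l : ℝ, θ l ≤ a * |l| ^ (p : ℝ) := by
  by_contra! hθ
  have hθ0 : θ 0 ≤ 0 := by
    have h := hfin 0
    rw [lintegral_congr_ae ((Lp.coeFn_zero ℝ p μ).mono fun x hx => by rw [hx, Pi.zero_apply]),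
      lintegral_const, hinf] at h
    exact ENNReal.ofReal_eq_zero.1 (by_contra fun h0 => by simp [ENNReal.mul_top h0] at h)
  obtain ⟨f, hf, hθf⟩ := exists_memLp_lintegral_ofReal_comp_eq_top hna hinf
    (zero_lt_one.trans_le hp).ne' hθ0 hθ
  have h := hfin (hf.toLp f)
  rw [lintegral_congr_ae (hf.coeFn_toLp.mono fun x hx => by rw [hx]), hθf] at h
  exact lt_irrefl _ h

/-- If `μ` is nonatomic, σ-finite, with `μ(Ω) = ∞`, and the
nonnegative continuous `θ` has finite superposition integral on all of
`Lᵖ(μ)`, then `θ(λ) ≤ a·|λ|^p` for some `a`. -/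
theorem stmt18 {Ω : Type*} [MeasurableSpace Ω] (μ : Measure Ω) [SigmaFinite μ]
    (hna : ∀ A : Set Ω, MeasurableSet A → 0 < μ A →
      ∃ B ⊆ A, MeasurableSet B ∧ 0 < μ B ∧ μ B < μ A)
    (hinf : μ Set.univ = ⊤)
    (p : NNReal) (hp : 1 ≤ p)
    (θ : ℝ → ℝ) (hθc : Continuous θ) (hθ0 : ∀ l : ℝ, 0 ≤ θ l)
    (hfin : ∀ f : Lp ℝ p μ, ∫⁻ t, ENNReal.ofReal (θ (f t)) ∂μ < ⊤) :
    ∃ a : ℝ, ∀ l : ℝ, θ l ≤ a * |l| ^ (p : ℝ) :=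
  stmt18_general μ hna hinf p hp θ hfin
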